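/- arXiv:1901.07147 — 2 statements merged into one kernel-verified Lean document; each statement's English description precedes it below -/
import Mathlib

section
/- Under the factor model and the quadratic regression model, if either condition (C1) Δ = 3 or condition (C2) diag(Γ₀ᵀΩΓ₀) = 0 holds, then Λ_y = 2ΣΩΣ, and consequently the interaction matrix has the explicit form Ω = Σ⁻¹ Λ_y Σ⁻¹ / 2. (This is the interaction part of Proposition 1.) -/
/-!
Since `x − u = Γ₀ z` is `σ(x)`-measurable, the entry `(k, l)` of `Λ_y` is the covariance of `Y`
with `(Γ₀ z)_k (Γ₀ z)_l`, and conditioning on `x` replaces `Y` by the regression function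
`α + (β ᵥ* Γ₀) ⬝ᵥ z + z ⬝ᵥ M z` with `M = Γ₀ᵀ Ω Γ₀`. Independence of the coordinates and the moment
assumptions give `Cov(z_d, z_a z_c) = 0` and
`Cov(z_d z_e, z_a z_c) = δ_da δ_ec + δ_dc δ_ea + (Δ − 3) [d = e = a = c]`, hence
`Λ_y = Γ₀ (M + Mᵀ) Γ₀ᵀ + (Δ − 3) (∑_a Γ₀_ka Γ₀_la M_aa)_kl`. Condition (C1) or (C2) kills the
last term, and `M` is symmetric, so `Λ_y = 2 Γ₀ Γ₀ᵀ Ω Γ₀ Γ₀ᵀ = 2 Σ Ω Σ`.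
-/

open Matrix MeasureTheory ProbabilityTheory

theorem dotProduct_mulVec_self_eq_sum {R ι : Type*} [CommSemiring R] [Fintype ι]
    (M : Matrix ι ι R) (x : ι → R) : x ⬝ᵥ M *ᵥ x = ∑ d, ∑ e, M d e * (x d * x e) := by
  simp only [dotProduct, mulVec, Finset.mul_sum]
  exact Finset.sum_congr rfl fun d _ => Finset.sum_congr rfl fun e _ => by ring

theorem mulVec_apply_mul_mulVec_apply {R κ ι : Type*} [CommSemiring R] [Fintype ι]
    (A : Matrix κ ι R) (x : ι → R) (k l : κ) :
    (A *ᵥ x) k * (A *ᵥ x) l = ∑ a, ∑ c, A k a * A l c * (x a * x c) := by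
  simp only [mulVec, dotProduct, Finset.sum_mul_sum]
  exact Finset.sum_congr rfl fun a _ => Finset.sum_congr rfl fun c _ => by ring

theorem mulVec_dotProduct_mulVec_mulVec {R κ ι : Type*} [CommSemiring R] [Fintype κ] [Fintype ι]
    (A : Matrix κ ι R) (B : Matrix κ κ R) (x : ι → R) :
    A *ᵥ x ⬝ᵥ B *ᵥ (A *ᵥ x) = x ⬝ᵥ (Aᵀ * B * A) *ᵥ x := by
  rw [← mulVec_mulVec, ← mulVec_mulVec, dotProduct_mulVec x, vecMul_transpose]

section Covariance

variable {Ω : Type*} {m mΩ : MeasurableSpace Ω} {μ : Measure Ω} [IsProbabilityMeasure μ]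
  {X Y : Ω → ℝ}

theorem integral_sub_integral_mul_eq_covariance (hX : MemLp X 2 μ) (hY : MemLp Y 2 μ) :
    ∫ ω, (X ω - ∫ ω', X ω' ∂μ) * Y ω ∂μ = cov[X, Y; μ] := by
  rw [covariance_eq_sub hX hY, ← integral_const_mul,
    ← integral_sub (hX.integrable_mul hY) ((hY.integrable one_le_two).const_mul _)]
  simp only [Pi.mul_apply, sub_mul]

theorem covariance_eq_of_condExp_ae_eq (hm : m ≤ mΩ) {g : Ω → ℝ} (hX : MemLp X 2 μ)
    (hY : MemLp Y 2 μ) (hYm : StronglyMeasurable[m] Y) (hXg : μ[X|m] =ᵐ[μ] g) :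
    cov[X, Y; μ] = cov[g, Y; μ] := by
  have hg : MemLp g 2 μ := (hX.condExp one_le_two).ae_eq hXg
  have hmean : ∫ ω, X ω ∂μ = ∫ ω, g ω ∂μ :=
    (integral_condExp hm).symm.trans (integral_congr_ae hXg)
  have hprod : ∫ ω, (X * Y) ω ∂μ = ∫ ω, (g * Y) ω ∂μ :=
    calc ∫ ω, (X * Y) ω ∂μ = ∫ ω, μ[X * Y|m] ω ∂μ := (integral_condExp hm).symm
      _ = ∫ ω, (μ[X|m] * Y) ω ∂μ := integral_congr_ae
          (condExp_mul_of_stronglyMeasurable_right hYm (hX.integrable_mul hY)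
            (hX.integrable one_le_two))
      _ = ∫ ω, (g * Y) ω ∂μ := integral_congr_ae (hXg.mul .rfl)
  rw [covariance_eq_sub hX hY, covariance_eq_sub hg hY, hmean, hprod]

end Covariance

structure IsStandardizedFactor {Ω ι : Type*} [MeasurableSpace Ω] (μ : Measure Ω)
    (z : Ω → ι → ℝ) (Δ : ℝ) : Prop where
  measurable : ∀ i, Measurable fun ω => z ω i
  iIndepFun : iIndepFun (fun i ω => z ω i) μ
  integral_eq_zero : ∀ i, ∫ ω, z ω i ∂μ = 0
  integral_sq : ∀ i, ∫ ω, z ω i ^ 2 ∂μ = 1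
  integral_pow_three : ∀ i, ∫ ω, z ω i ^ 3 ∂μ = 0
  integral_pow_four : ∀ i, ∫ ω, z ω i ^ 4 ∂μ = Δ
  integrable_pow_four : ∀ i, Integrable (fun ω => z ω i ^ 4) μ

namespace IsStandardizedFactor

variable {Ω ι : Type*} [MeasurableSpace Ω] {μ : Measure Ω} {z : Ω → ι → ℝ} {Δ : ℝ}

theorem integral_mul_eq_zero_of_notMem (hz : IsStandardizedFactor μ z Δ) {S : Finset ι} {d : ι}
    (hd : d ∉ S) {φ : (S → ℝ) → ℝ} (hφ : Measurable φ) :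
    ∫ ω, φ (fun i : S => z ω i) * z ω d ∂μ = 0 := by
  have hindep := (hz.iIndepFun.indepFun_finset S {d} (by simpa using hd) hz.measurable).comp
    hφ (measurable_pi_apply ⟨d, Finset.mem_singleton_self d⟩)
  have := hindep.integral_mul_eq_mul_integral
    (hφ.comp (measurable_pi_lambda _ fun i => hz.measurable i)).aestronglyMeasurable
    (hz.measurable d).aestronglyMeasurable
  simpa [hz.integral_eq_zero d] using this

theorem integral_sq_mul_sq (hz : IsStandardizedFactor μ z Δ) {a b : ι} (hab : a ≠ b) :
    ∫ ω, z ω a ^ 2 * z ω b ^ 2 ∂μ = 1 := by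
  have hindep := (hz.iIndepFun.indepFun hab).comp (measurable_id.pow_const 2)
    (measurable_id.pow_const 2)
  simpa [Function.comp_def, hz.integral_sq] using hindep.integral_mul_eq_mul_integral
    ((hz.measurable a).pow_const 2).aestronglyMeasurable
    ((hz.measurable b).pow_const 2).aestronglyMeasurable

theorem memLp_two_mul (hz : IsStandardizedFactor μ z Δ) (i j : ι) :
    MemLp (fun ω => z ω i * z ω j) 2 μ := by
  have hm : AEStronglyMeasurable (fun ω => z ω i * z ω j) μ :=
    ((hz.measurable i).mul (hz.measurable j)).aestronglyMeasurable
  rw [memLp_two_iff_integrable_sq hm]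
  refine ((hz.integrable_pow_four i).add (hz.integrable_pow_four j)).mono' (hm.pow 2) ?_
  refine .of_forall fun ω => ?_
  rw [Real.norm_eq_abs, abs_of_nonneg (by positivity), Pi.add_apply]
  nlinarith [sq_nonneg (z ω i ^ 2 - z ω j ^ 2)]

theorem memLp_two [IsFiniteMeasure μ] (hz : IsStandardizedFactor μ z Δ) (i : ι) :
    MemLp (fun ω => z ω i) 2 μ := by
  have hm := (hz.measurable i).aestronglyMeasurable (μ := μ)
  rw [memLp_two_iff_integrable_sq_norm hm]
  refine integrable_norm_pow_of_le hm (by norm_num : 2 ≤ 4) ?_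
  simpa [Real.norm_eq_abs, pow_abs, Even.pow_abs ⟨2, rfl⟩] using hz.integrable_pow_four i

theorem memLp_two_dotProduct [Fintype ι] [IsFiniteMeasure μ] (hz : IsStandardizedFactor μ z Δ)
    (b : ι → ℝ) : MemLp (fun ω => b ⬝ᵥ z ω) 2 μ :=
  memLp_finsetSum _ fun d _ => (hz.memLp_two d).const_mul (b d)

theorem memLp_two_quadForm [Fintype ι] [IsFiniteMeasure μ] (hz : IsStandardizedFactor μ z Δ)
    (M : Matrix ι ι ℝ) : MemLp (fun ω => z ω ⬝ᵥ M *ᵥ z ω) 2 μ := by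
  simp_rw [dotProduct_mulVec_self_eq_sum]
  exact memLp_finsetSum _ fun d _ => memLp_finsetSum _ fun e _ =>
    (hz.memLp_two_mul d e).const_mul _

theorem memLp_two_mulVec_mul_mulVec {κ : Type*} [Fintype ι] [IsFiniteMeasure μ]
    (hz : IsStandardizedFactor μ z Δ) (A : Matrix κ ι ℝ) (k l : κ) :
    MemLp (fun ω => (A *ᵥ z ω) k * (A *ᵥ z ω) l) 2 μ := by
  simp_rw [mulVec_apply_mul_mulVec_apply]
  exact memLp_finsetSum _ fun a _ => memLp_finsetSum _ fun c _ =>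
    (hz.memLp_two_mul a c).const_mul _

variable [DecidableEq ι]

theorem integral_mul_mul (hz : IsStandardizedFactor μ z Δ) (a b c : ι) :
    ∫ ω, z ω a * z ω b * z ω c ∂μ = 0 := by
  have unique : ∀ {a b c : ι}, c ≠ a → c ≠ b → ∫ ω, z ω a * z ω b * z ω c ∂μ = 0 :=
    fun {a b c} hca hcb => hz.integral_mul_eq_zero_of_notMem (S := {a, b}) (by simp [hca, hcb])
      (φ := fun x => x ⟨a, by simp⟩ * x ⟨b, by simp⟩) (by fun_prop)
  have rotate : ∀ a b c : ι, ∫ ω, z ω a * z ω b * z ω c ∂μ = ∫ ω, z ω b * z ω c * z ω a ∂μ :=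
    fun a b c => integral_congr_ae (.of_forall fun ω => by ring)
  rcases eq_or_ne c a with rfl | hca
  · rcases eq_or_ne b c with rfl | hbc
    · simpa [pow_three, mul_assoc] using hz.integral_pow_three b
    · rw [rotate, rotate]; exact unique hbc hbc
  · rcases eq_or_ne c b with rfl | hcb
    · rcases eq_or_ne a c with rfl | hac
      · simpa [pow_three, mul_assoc] using hz.integral_pow_three a
      · rw [rotate]; exact unique hac hac
    · exact unique hca hcb

theorem integral_mul (hz : IsStandardizedFactor μ z Δ) (a b : ι) :
    ∫ ω, z ω a * z ω b ∂μ = if a = b then 1 else 0 := by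
  rcases eq_or_ne a b with rfl | hab
  · simpa [sq] using hz.integral_sq a
  · rw [if_neg hab]
    exact hz.integral_mul_eq_zero_of_notMem (S := {a}) (by simpa using hab.symm)
      (φ := fun x => x ⟨a, by simp⟩) (measurable_pi_apply _)

/-- Isserlis' formula, corrected by the excess kurtosis `Δ - 3` on the diagonal. -/
theorem integral_mul_mul_mul (hz : IsStandardizedFactor μ z Δ) (a b c d : ι) :
    ∫ ω, z ω a * z ω b * z ω c * z ω d ∂μ =
      (if a = b then 1 else 0) * (if c = d then 1 else 0) +
      (if a = c then 1 else 0) * (if b = d then 1 else 0) +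
      (if a = d then 1 else 0) * (if b = c then 1 else 0) +
      (if a = b ∧ a = c ∧ a = d then Δ - 3 else 0) := by
  have unique : ∀ {a b c d : ι}, d ≠ a → d ≠ b → d ≠ c →
      ∫ ω, z ω a * z ω b * z ω c * z ω d ∂μ = 0 :=
    fun {a b c d} hda hdb hdc => hz.integral_mul_eq_zero_of_notMem (S := {a, b, c})
      (by simp [hda, hdb, hdc]) (φ := fun x => x ⟨a, by simp⟩ * x ⟨b, by simp⟩ * x ⟨c, by simp⟩)
      (by fun_prop)
  have rotate : ∀ a b c d : ι, ∫ ω, z ω a * z ω b * z ω c * z ω d ∂μ =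
      ∫ ω, z ω b * z ω c * z ω d * z ω a ∂μ :=
    fun a b c d => integral_congr_ae (.of_forall fun ω => by ring)
  have pair : ∀ {a b : ι} {f : Ω → ℝ}, a ≠ b → (∀ ω, f ω = z ω a ^ 2 * z ω b ^ 2) →
      ∫ ω, f ω ∂μ = 1 := fun hab hf => by
    rw [← hz.integral_sq_mul_sq hab]
    exact integral_congr_ae (.of_forall hf)
  -- An index occurring once factors out by independence and kills the moment; in the remaining
  -- cases the indices are all equal or form two distinct pairs.
  rcases eq_or_ne a b with rfl | hab
  · rcases eq_or_ne c d with rfl | hcd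
    · rcases eq_or_ne a c with rfl | hac
      · rw [integral_congr_ae (g := fun ω => z ω a ^ 4) (.of_forall fun ω => by ring),
          hz.integral_pow_four]
        norm_num
      · rw [pair hac fun ω => by ring]; simp [hac]
    · rcases eq_or_ne c a with rfl | hca
      · rw [unique hcd.symm hcd.symm hcd.symm]; simp [hcd]
      · rw [rotate, rotate, rotate, unique hcd hca hca]; simp [hcd, Ne.symm hca]
  · rcases eq_or_ne a c with rfl | hac
    · rcases eq_or_ne b d with rfl | hbd
      · rw [pair hab fun ω => by ring]; simp [hab]
      · rw [rotate, rotate, unique hab.symm hbd hab.symm]; simp [hab, hab.symm, hbd]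
    · rcases eq_or_ne a d with rfl | had
      · rcases eq_or_ne b c with rfl | hbc
        · rw [pair hab fun ω => by ring]; simp [hab]
        · rw [rotate, rotate, unique hbc hab.symm hab.symm]; simp [hab, hbc, hac]
      · rw [rotate, unique hab hac had]; simp [hab, hac, had]

variable [IsProbabilityMeasure μ]

theorem covariance_coord_mul (hz : IsStandardizedFactor μ z Δ) (d a c : ι) :
    cov[fun ω => z ω d, fun ω => z ω a * z ω c; μ] = 0 := by
  rw [covariance_eq_sub (hz.memLp_two d) (hz.memLp_two_mul a c)]
  simp only [Pi.mul_apply, ← mul_assoc]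
  rw [hz.integral_mul_mul, hz.integral_eq_zero, zero_mul, sub_zero]

theorem covariance_mul_mul (hz : IsStandardizedFactor μ z Δ) (d e a c : ι) :
    cov[fun ω => z ω d * z ω e, fun ω => z ω a * z ω c; μ] =
      (if d = a then 1 else 0) * (if e = c then 1 else 0) +
      (if d = c then 1 else 0) * (if e = a then 1 else 0) +
      (if d = e ∧ d = a ∧ d = c then Δ - 3 else 0) := by
  rw [covariance_eq_sub (hz.memLp_two_mul d e) (hz.memLp_two_mul a c)]
  simp only [Pi.mul_apply, ← mul_assoc]
  rw [hz.integral_mul_mul_mul, hz.integral_mul, hz.integral_mul]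
  ring

variable [Fintype ι]

theorem covariance_dotProduct_mul (hz : IsStandardizedFactor μ z Δ) (b : ι → ℝ) (a c : ι) :
    cov[fun ω => b ⬝ᵥ z ω, fun ω => z ω a * z ω c; μ] = 0 := by
  simp only [dotProduct]
  rw [covariance_fun_sum_left (fun d => (hz.memLp_two d).const_mul (b d)) (hz.memLp_two_mul a c)]
  simp [covariance_const_mul_left, hz.covariance_coord_mul]

theorem covariance_quadForm_mul (hz : IsStandardizedFactor μ z Δ) (M : Matrix ι ι ℝ) (a c : ι) :
    cov[fun ω => z ω ⬝ᵥ M *ᵥ z ω, fun ω => z ω a * z ω c; μ] =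
      M a c + M c a + if a = c then (Δ - 3) * M a a else 0 := by
  simp_rw [dotProduct_mulVec_self_eq_sum]
  rw [covariance_fun_sum_left (X := fun d ω => ∑ e, M d e * (z ω d * z ω e))
    (fun d => memLp_finsetSum _ fun e _ => (hz.memLp_two_mul d e).const_mul _)
    (hz.memLp_two_mul a c)]
  simp_rw [covariance_fun_sum_left (fun e => (hz.memLp_two_mul _ e).const_mul _)
    (hz.memLp_two_mul a c), covariance_const_mul_left, hz.covariance_mul_mul]
  simp [mul_add, Finset.sum_add_distrib, mul_ite, ite_and, Finset.sum_ite_eq, Finset.sum_ite_eq',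
    mul_comm]

theorem covariance_quadratic_mul (hz : IsStandardizedFactor μ z Δ) (α : ℝ) (b : ι → ℝ)
    (M : Matrix ι ι ℝ) (a c : ι) :
    cov[fun ω => α + b ⬝ᵥ z ω + z ω ⬝ᵥ M *ᵥ z ω, fun ω => z ω a * z ω c; μ] =
      M a c + M c a + if a = c then (Δ - 3) * M a a else 0 := by
  have hL := hz.memLp_two_dotProduct b
  have hQ := hz.memLp_two_quadForm M
  have hLQ : MemLp (fun ω => b ⬝ᵥ z ω + z ω ⬝ᵥ M *ᵥ z ω) 2 μ := hL.add hQ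
  simp_rw [add_assoc]
  rw [covariance_const_add_left (hLQ.integrable one_le_two), ← Pi.add_def,
    covariance_add_left hL hQ (hz.memLp_two_mul a c), hz.covariance_dotProduct_mul, hz.covariance_quadForm_mul, zero_add, add_assoc]

theorem covariance_quadratic_mulVec_mul_mulVec {κ : Type*} (hz : IsStandardizedFactor μ z Δ)
    (α : ℝ) (b : ι → ℝ) (M : Matrix ι ι ℝ) (A : Matrix κ ι ℝ) (k l : κ) :
    cov[fun ω => α + b ⬝ᵥ z ω + z ω ⬝ᵥ M *ᵥ z ω, fun ω => (A *ᵥ z ω) k * (A *ᵥ z ω) l; μ] =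
      (A * (M + Mᵀ) * Aᵀ) k l + (Δ - 3) * ∑ a, A k a * A l a * M a a := by
  have hq : MemLp (fun ω => α + b ⬝ᵥ z ω + z ω ⬝ᵥ M *ᵥ z ω) 2 μ :=
    ((memLp_const α).add (hz.memLp_two_dotProduct b)).add (hz.memLp_two_quadForm M)
  simp_rw [mulVec_apply_mul_mulVec_apply]
  rw [covariance_fun_sum_right (X := fun a ω => ∑ c, A k a * A l c * (z ω a * z ω c))
    (fun a => memLp_finsetSum _ fun c _ => (hz.memLp_two_mul a c).const_mul _) hq]
  simp_rw [covariance_fun_sum_right (fun c => (hz.memLp_two_mul _ c).const_mul _) hq,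
    covariance_const_mul_right, hz.covariance_quadratic_mul]
  simp only [mul_add, mul_ite, mul_zero, Finset.sum_add_distrib, Finset.sum_ite_eq,
    Finset.mem_univ, ↓reduceIte, mul_apply, Matrix.add_apply, transpose_apply, add_mul,
    Finset.sum_mul, Finset.mul_sum]
  rw [Finset.sum_comm (f := fun c a => A k a * M a c * A l c),
    Finset.sum_comm (f := fun c a => A k a * M c a * A l c)]
  simp only [mul_comm, mul_left_comm, mul_assoc]

theorem integral_centered_mul_mulVec_mul_mulVec {κ : Type*} (hz : IsStandardizedFactor μ z Δ)
    {Y : Ω → ℝ} (hY : MemLp Y 2 μ) {A : Matrix κ ι ℝ} {u : κ → ℝ} {α : ℝ} {b : ι → ℝ}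
    {M : Matrix ι ι ℝ}
    (hmodel : μ[Y | MeasurableSpace.comap (fun ω => A *ᵥ z ω + u) inferInstance]
      =ᵐ[μ] fun ω => α + b ⬝ᵥ z ω + z ω ⬝ᵥ M *ᵥ z ω) (k l : κ) :
    ∫ ω, (Y ω - ∫ ω', Y ω' ∂μ) * (A *ᵥ z ω) k * (A *ᵥ z ω) l ∂μ =
      (A * (M + Mᵀ) * Aᵀ) k l + (Δ - 3) * ∑ a, A k a * A l a * M a a := by
  have hh := hz.memLp_two_mulVec_mul_mulVec A k l
  have hx : Measurable fun ω => A *ᵥ z ω + u :=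
    measurable_pi_lambda _ fun k => (Finset.measurable_sum _ fun a _ =>
      (hz.measurable a).const_mul (A k a)).add_const (u k)
  have hhm : StronglyMeasurable[MeasurableSpace.comap (fun ω => A *ᵥ z ω + u) inferInstance]
      fun ω => (A *ᵥ z ω) k * (A *ᵥ z ω) l := by
    have hφ : Measurable fun v : κ → ℝ => (v k - u k) * (v l - u l) := by fun_prop
    simpa [Function.comp_def] using
      (hφ.comp (comap_measurable fun ω => A *ᵥ z ω + u)).stronglyMeasurable
  conv_lhs => simp only [mul_assoc]
  rw [integral_sub_integral_mul_eq_covariance hY hh,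
    covariance_eq_of_condExp_ae_eq hx.comap_le hY hh hhm hmodel,
    hz.covariance_quadratic_mulVec_mul_mulVec]

end IsStandardizedFactor

theorem interaction_explicit_form_general {p q : ℕ} {Ω : Type*} [MeasurableSpace Ω]
    (μ : Measure Ω) [IsProbabilityMeasure μ]
    (z : Ω → Fin q → ℝ) (Γ₀ : Matrix (Fin p) (Fin q) ℝ) (u : Fin p → ℝ)
    (Sig Om : Matrix (Fin p) (Fin p) ℝ) (Y : Ω → ℝ) (αc : ℝ) (βv : Fin p → ℝ) (Δ : ℝ)
    -- the factor z has i.i.d. coordinates with the stated moments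
    (hz_meas : ∀ k, Measurable fun ω => z ω k)
    (hz_indep : iIndepFun (fun k ω => z ω k) μ)
    (hm1 : ∀ k, ∫ ω, z ω k ∂μ = 0)
    (hm2 : ∀ k, ∫ ω, (z ω k) ^ 2 ∂μ = 1)
    (hm3 : ∀ k, ∫ ω, (z ω k) ^ 3 ∂μ = 0)
    (hm4 : ∀ k, ∫ ω, (z ω k) ^ 4 ∂μ = Δ)
    (hint4 : ∀ k, Integrable (fun ω => (z ω k) ^ 4) μ)
    -- Γ₀Γ₀ᵀ = Σ with Σ positive definite
    (hSig : Γ₀ * Γ₀ᵀ = Sig) (hSigPD : Sig.PosDef)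
    -- Y is a square-integrable response
    (hY2 : MemLp Y 2 μ)
    -- Ω is symmetric
    (hOm : Om.IsSymm)
    -- the quadratic regression model, with x := Γ₀ z + u (so that x − u = Γ₀ z)
    (hmodel : μ[Y | MeasurableSpace.comap (fun ω => Γ₀.mulVec (z ω) + u) inferInstance]
        =ᵐ[μ] fun ω => αc + Γ₀.mulVec (z ω) ⬝ᵥ βv +
          Γ₀.mulVec (z ω) ⬝ᵥ Om.mulVec (Γ₀.mulVec (z ω)))
    -- condition (C1) or condition (C2)
    (hC : Δ = 3 ∨ ∀ k, (Γ₀ᵀ * Om * Γ₀) k k = 0) :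
    (Matrix.of fun k l =>
        ∫ ω, (Y ω - ∫ ω', Y ω' ∂μ) * Γ₀.mulVec (z ω) k * Γ₀.mulVec (z ω) l ∂μ) =
        (2 : ℝ) • (Sig * Om * Sig) ∧
      Om = (1 / 2 : ℝ) • (Sig⁻¹ * (Matrix.of fun k l =>
        ∫ ω, (Y ω - ∫ ω', Y ω' ∂μ) * Γ₀.mulVec (z ω) k * Γ₀.mulVec (z ω) l ∂μ) * Sig⁻¹) := by
  have hz : IsStandardizedFactor μ z Δ := ⟨hz_meas, hz_indep, hm1, hm2, hm3, hm4, hint4⟩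
  have hMsymm : (Γ₀ᵀ * Om * Γ₀)ᵀ = Γ₀ᵀ * Om * Γ₀ := by
    rw [transpose_mul, transpose_mul, transpose_transpose, hOm.eq, Matrix.mul_assoc]
  have hkurt : ∀ k l, (Δ - 3) * ∑ a, Γ₀ k a * Γ₀ l a * (Γ₀ᵀ * Om * Γ₀) a a = 0 := by
    rcases hC with hΔ | hdiag
    · simp [hΔ]
    · simp [hdiag]
  have hmodel' : μ[Y | MeasurableSpace.comap (fun ω => Γ₀ *ᵥ z ω + u) inferInstance]
      =ᵐ[μ] fun ω => αc + (βv ᵥ* Γ₀) ⬝ᵥ z ω + z ω ⬝ᵥ (Γ₀ᵀ * Om * Γ₀) *ᵥ z ω :=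
    hmodel.trans (.of_forall fun ω => by
      dsimp only
      rw [dotProduct_comm _ βv, dotProduct_mulVec, mulVec_dotProduct_mulVec_mulVec])
  have hΛ : (Matrix.of fun k l =>
      ∫ ω, (Y ω - ∫ ω', Y ω' ∂μ) * Γ₀.mulVec (z ω) k * Γ₀.mulVec (z ω) l ∂μ) =
      (2 : ℝ) • (Sig * Om * Sig) := by
    ext k l
    rw [of_apply, hz.integral_centered_mul_mulVec_mul_mulVec hY2 hmodel', hkurt, hMsymm, add_zero,
      ← two_smul ℝ, Matrix.mul_smul, Matrix.smul_mul, ← hSig]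
    simp only [Matrix.mul_assoc]
  refine ⟨hΛ, ?_⟩
  have hdet : IsUnit Sig.det := isUnit_iff_ne_zero.mpr hSigPD.det_pos.ne'
  rw [hΛ, Matrix.mul_smul, Matrix.smul_mul, smul_smul, Matrix.mul_assoc Sig,
    Matrix.nonsing_inv_mul_cancel_left _ _ hdet, Matrix.mul_nonsing_inv_cancel_right _ _ hdet]
  norm_num

/-- (Interaction part of Proposition 1.)  Under the factor model `x = Γ₀z + u` and the quadratic
regression model `E(Y|x) = α + (x−u)ᵀβ + (x−u)ᵀΩ(x−u)` a.s., if either (C1) `Δ = 3` or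
(C2) `diag(Γ₀ᵀΩΓ₀) = 0`, then `Λ_y = 2ΣΩΣ` where
`Λ_y := E[(Y − E Y)(x − u)(x − u)ᵀ]`, and consequently `Ω = Σ⁻¹Λ_yΣ⁻¹/2`. -/
theorem interaction_explicit_form {p q : ℕ} {Ω : Type*} [MeasurableSpace Ω]
    (μ : Measure Ω) [IsProbabilityMeasure μ]
    (z : Ω → Fin q → ℝ) (Γ₀ : Matrix (Fin p) (Fin q) ℝ) (u : Fin p → ℝ)
    (Sig Om : Matrix (Fin p) (Fin p) ℝ) (Y : Ω → ℝ) (αc : ℝ) (βv : Fin p → ℝ) (Δ : ℝ)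
    -- the factor z has i.i.d. coordinates with the stated moments
    (hz_meas : ∀ k, Measurable fun ω => z ω k)
    (hz_indep : iIndepFun (fun k ω => z ω k) μ)
    (hz_ident : ∀ k l, IdentDistrib (fun ω => z ω k) (fun ω => z ω l) μ μ)
    (hm1 : ∀ k, ∫ ω, z ω k ∂μ = 0)
    (hm2 : ∀ k, ∫ ω, (z ω k) ^ 2 ∂μ = 1)
    (hm3 : ∀ k, ∫ ω, (z ω k) ^ 3 ∂μ = 0)
    (hm4 : ∀ k, ∫ ω, (z ω k) ^ 4 ∂μ = Δ)
    (hint4 : ∀ k, Integrable (fun ω => (z ω k) ^ 4) μ)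
    -- Γ₀Γ₀ᵀ = Σ with Σ positive definite
    (hSig : Γ₀ * Γ₀ᵀ = Sig) (hSigPD : Sig.PosDef)
    -- Y is a square-integrable response
    (hY_meas : Measurable Y) (hY2 : MemLp Y 2 μ)
    -- Ω is symmetric
    (hOm : Om.IsSymm)
    -- the quadratic regression model, with x := Γ₀ z + u (so that x − u = Γ₀ z)
    (hmodel : μ[Y | MeasurableSpace.comap (fun ω => Γ₀.mulVec (z ω) + u) inferInstance]
        =ᵐ[μ] fun ω => αc + Γ₀.mulVec (z ω) ⬝ᵥ βv +
          Γ₀.mulVec (z ω) ⬝ᵥ Om.mulVec (Γ₀.mulVec (z ω)))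
    -- condition (C1) or condition (C2)
    (hC : Δ = 3 ∨ ∀ k, (Γ₀ᵀ * Om * Γ₀) k k = 0) :
    (Matrix.of fun k l =>
        ∫ ω, (Y ω - ∫ ω', Y ω' ∂μ) * Γ₀.mulVec (z ω) k * Γ₀.mulVec (z ω) l ∂μ) =
        (2 : ℝ) • (Sig * Om * Sig) ∧
      Om = (1 / 2 : ℝ) • (Sig⁻¹ * (Matrix.of fun k l =>
        ∫ ω, (Y ω - ∫ ω', Y ω' ∂μ) * Γ₀.mulVec (z ω) k * Γ₀.mulVec (z ω) l ∂μ) * Sig⁻¹) :=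
  interaction_explicit_form_general μ z Γ₀ u Sig Om Y αc βv Δ hz_meas hz_indep hm1 hm2 hm3 hm4 hint4
    hSig hSigPD hY2 hOm hmodel hC
end

section
/- (Appendix Lemma on products of variables with exponential moments.) Let W₁ and W₂ be real random variables such that E{exp(c₁|W₁|^{α₁})} ≤ A₁ and E{exp(c₂|W₂|^{α₂})} ≤ A₂, where c₁, c₂, α₁, α₂, A₁, A₂ > 0. Then E{exp( min(c₁,c₂) · |W₁W₂|^{α₁α₂/(α₁+α₂)} )} ≤ max(A₁, A₂). -/
open MeasureTheory Real

private lemma pointwise_exp_bound {c₁ c₂ α₁ α₂ : ℝ}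
    (hc₁ : 0 < c₁) (hc₂ : 0 < c₂) (hα₁ : 0 < α₁) (hα₂ : 0 < α₂) (x y : ℝ) :
    exp (min c₁ c₂ * |x * y| ^ (α₁ * α₂ / (α₁ + α₂))) ≤
      (α₂ / (α₁ + α₂)) * exp (c₁ * |x| ^ α₁) + (α₁ / (α₁ + α₂)) * exp (c₂ * |y| ^ α₂) := by
  have hs : 0 < α₁ + α₂ := by linarith
  set θ : ℝ := α₂ / (α₁ + α₂) with hθdef
  set θ' : ℝ := α₁ / (α₁ + α₂) with hθ'def
  have hθ : 0 ≤ θ := by positivity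
  have hθ' : 0 ≤ θ' := by positivity
  have hθsum : θ + θ' = 1 := by rw [hθdef, hθ'def]; field_simp; ring
  have hβ₁ : α₁ * α₂ / (α₁ + α₂) = α₁ * θ := by rw [hθdef]; field_simp
  have hβ₂ : α₁ * α₂ / (α₁ + α₂) = α₂ * θ' := by rw [hθ'def]; field_simp
  set a : ℝ := |x| ^ α₁ with hadef
  set b : ℝ := |y| ^ α₂ with hbdef
  have ha : 0 ≤ a := by positivity
  have hb : 0 ≤ b := by positivity
  have h1 : a ^ θ = |x| ^ (α₁ * θ) := (Real.rpow_mul (abs_nonneg x) _ _).symm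
  have h2 : b ^ θ' = |y| ^ (α₂ * θ') := (Real.rpow_mul (abs_nonneg y) _ _).symm
  have habs : |x * y| ^ (α₁ * α₂ / (α₁ + α₂)) = a ^ θ * b ^ θ' := by
    rw [abs_mul, Real.mul_rpow (abs_nonneg x) (abs_nonneg y), h1, h2, ← hβ₁, ← hβ₂]
  -- weighted AM-GM on a, b
  have hgm : a ^ θ * b ^ θ' ≤ θ * a + θ' * b :=
    Real.geom_mean_le_arith_mean2_weighted hθ hθ' ha hb hθsum
  have hmin₁ : min c₁ c₂ ≤ c₁ := min_le_left _ _
  have hmin₂ : min c₁ c₂ ≤ c₂ := min_le_right _ _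
  have hminpos : 0 < min c₁ c₂ := lt_min hc₁ hc₂
  have hkey : min c₁ c₂ * |x * y| ^ (α₁ * α₂ / (α₁ + α₂))
      ≤ θ * (c₁ * a) + θ' * (c₂ * b) := by
    rw [habs]
    have t0 : min c₁ c₂ * (a ^ θ * b ^ θ') ≤ min c₁ c₂ * (θ * a + θ' * b) :=
      mul_le_mul_of_nonneg_left hgm hminpos.le
    have t1 : θ * (min c₁ c₂ * a) ≤ θ * (c₁ * a) :=
      mul_le_mul_of_nonneg_left (mul_le_mul_of_nonneg_right hmin₁ ha) hθ
    have t2 : θ' * (min c₁ c₂ * b) ≤ θ' * (c₂ * b) :=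
      mul_le_mul_of_nonneg_left (mul_le_mul_of_nonneg_right hmin₂ hb) hθ'
    nlinarith [t0, t1, t2]
  calc exp (min c₁ c₂ * |x * y| ^ (α₁ * α₂ / (α₁ + α₂)))
      ≤ exp (θ * (c₁ * a) + θ' * (c₂ * b)) := exp_le_exp.2 hkey
    _ = exp (c₁ * a) ^ θ * exp (c₂ * b) ^ θ' := by
        rw [Real.exp_add, mul_comm θ _, mul_comm θ' _, Real.exp_mul (c₁ * a) θ, Real.exp_mul (c₂ * b) θ']
    _ ≤ θ * exp (c₁ * a) + θ' * exp (c₂ * b) :=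
        Real.geom_mean_le_arith_mean2_weighted hθ hθ' (exp_pos _).le (exp_pos _).le hθsum

/-- (Appendix Lemma on products of variables with exponential moments.) Let `W₁`, `W₂` be real
random variables with `E exp(c₁|W₁|^α₁) ≤ A₁` and `E exp(c₂|W₂|^α₂) ≤ A₂`, where
`c₁, c₂, α₁, α₂, A₁, A₂ > 0`.  Then
`E exp(min(c₁,c₂) |W₁W₂|^{α₁α₂/(α₁+α₂)}) ≤ max(A₁, A₂)`. -/
theorem product_exponential_moment_bound {Ω : Type*} [MeasurableSpace Ω]
    (μ : Measure Ω) [IsProbabilityMeasure μ]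
    (W₁ W₂ : Ω → ℝ) (c₁ c₂ α₁ α₂ A₁ A₂ : ℝ)
    (hc₁ : 0 < c₁) (hc₂ : 0 < c₂) (hα₁ : 0 < α₁) (hα₂ : 0 < α₂)
    (hA₁ : 0 < A₁) (hA₂ : 0 < A₂)
    (hW₁ : Measurable W₁) (hW₂ : Measurable W₂)
    (hint₁ : Integrable (fun ω => exp (c₁ * |W₁ ω| ^ α₁)) μ)
    (hint₂ : Integrable (fun ω => exp (c₂ * |W₂ ω| ^ α₂)) μ)
    (hbd₁ : ∫ ω, exp (c₁ * |W₁ ω| ^ α₁) ∂μ ≤ A₁)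
    (hbd₂ : ∫ ω, exp (c₂ * |W₂ ω| ^ α₂) ∂μ ≤ A₂) :
    Integrable (fun ω => exp (min c₁ c₂ * |W₁ ω * W₂ ω| ^ (α₁ * α₂ / (α₁ + α₂)))) μ ∧
      ∫ ω, exp (min c₁ c₂ * |W₁ ω * W₂ ω| ^ (α₁ * α₂ / (α₁ + α₂))) ∂μ ≤ max A₁ A₂ := by
  have hs : 0 < α₁ + α₂ := by linarith
  set θ : ℝ := α₂ / (α₁ + α₂) with hθdef
  set θ' : ℝ := α₁ / (α₁ + α₂) with hθ'def
  have hθ : 0 ≤ θ := by positivity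
  have hθ' : 0 ≤ θ' := by positivity
  have hθsum : θ + θ' = 1 := by rw [hθdef, hθ'def]; field_simp; ring
  have hpt : ∀ ω, exp (min c₁ c₂ * |W₁ ω * W₂ ω| ^ (α₁ * α₂ / (α₁ + α₂)))
      ≤ θ * exp (c₁ * |W₁ ω| ^ α₁) + θ' * exp (c₂ * |W₂ ω| ^ α₂) := fun ω =>
    pointwise_exp_bound hc₁ hc₂ hα₁ hα₂ (W₁ ω) (W₂ ω)
  have hbnd_int : Integrable
      (fun ω => θ * exp (c₁ * |W₁ ω| ^ α₁) + θ' * exp (c₂ * |W₂ ω| ^ α₂)) μ :=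
    (hint₁.const_mul θ).add (hint₂.const_mul θ')
  have hmeas : Measurable
      (fun ω => exp (min c₁ c₂ * |W₁ ω * W₂ ω| ^ (α₁ * α₂ / (α₁ + α₂)))) :=
    (((((hW₁.mul hW₂).abs).pow measurable_const).const_mul _).exp)
  have hint : Integrable
      (fun ω => exp (min c₁ c₂ * |W₁ ω * W₂ ω| ^ (α₁ * α₂ / (α₁ + α₂)))) μ := by
    refine hbnd_int.mono' hmeas.aestronglyMeasurable (Filter.Eventually.of_forall fun ω => ?_)
    rw [Real.norm_eq_abs, abs_of_pos (exp_pos _)]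
    exact hpt ω
  refine ⟨hint, ?_⟩
  calc ∫ ω, exp (min c₁ c₂ * |W₁ ω * W₂ ω| ^ (α₁ * α₂ / (α₁ + α₂))) ∂μ
      ≤ ∫ ω, (θ * exp (c₁ * |W₁ ω| ^ α₁) + θ' * exp (c₂ * |W₂ ω| ^ α₂)) ∂μ :=
        integral_mono hint hbnd_int hpt
    _ = θ * ∫ ω, exp (c₁ * |W₁ ω| ^ α₁) ∂μ + θ' * ∫ ω, exp (c₂ * |W₂ ω| ^ α₂) ∂μ := by
        rw [integral_add (hint₁.const_mul θ) (hint₂.const_mul θ'),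
          integral_const_mul, integral_const_mul]
    _ ≤ θ * A₁ + θ' * A₂ :=
        add_le_add (mul_le_mul_of_nonneg_left hbd₁ hθ) (mul_le_mul_of_nonneg_left hbd₂ hθ')
    _ ≤ θ * max A₁ A₂ + θ' * max A₁ A₂ :=
        add_le_add (mul_le_mul_of_nonneg_left (le_max_left _ _) hθ)
          (mul_le_mul_of_nonneg_left (le_max_right _ _) hθ')
    _ = max A₁ A₂ := by rw [← add_mul, hθsum, one_mul]
end
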